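/- With the same hypotheses as the cone contraction statement (orthogonal splitting ℝ^d = ⊕ E^i, A preserving each E^i with norms and co-norms of A|_{E^i} in (e^{λ'_i − δ/4}, e^{λ'_i + δ/4}), δ < κ/2 where κ = (1/2)min_i(λ'_i−λ'_{i+1})), define the dual cone K_{j,γ} := {v : ‖∑_{i≤j} v^i‖ < γ·‖∑_{i≥j+1} v^i‖}. Then A⁻¹(K_{j,γ}) ⊂ K_{j, γ·e^{−κ+δ/4}} for every j ∈ {1,...,k−1} and every γ > 0. -/

import Mathlib

noncomputable section

abbrev Euc (d : ℕ) := EuclideanSpace ℝ (Fin d)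

noncomputable def projS {d : ℕ} (V : Submodule ℝ (Euc d)) : Euc d →L[ℝ] Euc d :=
  V.subtypeL ∘L V.orthogonalProjection

def Vlow {d k : ℕ} (E : Fin k → Submodule ℝ (Euc d)) (j : ℕ) : Submodule ℝ (Euc d) :=
  ⨆ (i : Fin k) (_ : (i : ℕ) < j), E i

/-- The dual cone `K_{j,γ} = {v : ‖∑_{i≤j} v^i‖ < γ ‖∑_{i≥j+1} v^i‖}`. -/
def coneL {d k : ℕ} (E : Fin k → Submodule ℝ (Euc d)) (j : ℕ) (γ : ℝ) : Set (Euc d) :=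
  {v | ‖projS (Vlow E j) v‖ < γ * ‖v - projS (Vlow E j) v‖}

/-!
Write `V` for the span of the blocks `E i` with `i < j` (blocks are indexed from `0`, so the
last of them is `a = j - 1` and the first one outside is `b = j`). Orthogonality and
`⨆ i, E i = ⊤` make `Vᗮ` the span of the remaining blocks, so `A`, which preserves every block,
preserves both `V` and `Vᗮ` and therefore commutes with the orthogonal projection onto `V`.
Pythagoras over the blocks turns the blockwise bounds into `e^{λ_a - δ/4} ‖u‖ ≤ ‖A u‖` on `V`
and `‖A u'‖ ≤ e^{λ_b + δ/4} ‖u'‖` on `Vᗮ`. Hence if `A w` lies in the cone of aperture `γ`, the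
components `u, u'` of `w` satisfy `‖u‖ < γ e^{λ_b - λ_a + δ/2} ‖u'‖`, and
`λ_a - λ_b ≥ 2κ ≥ κ + δ/4`.
-/

open Set Submodule

namespace Submodule

variable {𝕜 F ι 𝓕 : Type*} [RCLike 𝕜] [NormedAddCommGroup F] [InnerProductSpace 𝕜 F]
  [FunLike 𝓕 F F] [LinearMapClass 𝓕 𝕜 F F]

theorem starProjection_map_eq_map_starProjection (V : Submodule 𝕜 F)
    [V.HasOrthogonalProjection] {T : 𝓕} (hV : MapsTo T V V) (hVperp : MapsTo T Vᗮ Vᗮ) (w : F) :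
    V.starProjection (T w) = T (V.starProjection w) := by
  have hsplit : T w = T (V.starProjection w) + T (w - V.starProjection w) := by
    rw [← map_add, add_sub_cancel]
  rw [hsplit, map_add, starProjection_eq_self_iff.mpr (hV (V.starProjection_apply_mem w)),
    (V.starProjection_apply_eq_zero_iff).mpr (hVperp (V.sub_starProjection_mem_orthogonal w)),
    add_zero]

theorem norm_starProjection_lt_of_map (V : Submodule 𝕜 F)
    [V.HasOrthogonalProjection] {T : 𝓕} (hV : MapsTo T V V) (hVperp : MapsTo T Vᗮ Vᗮ)
    {m M c γ : ℝ} (hm : 0 < m) (hγ : 0 ≤ γ) (hlow : ∀ v ∈ V, m * ‖v‖ ≤ ‖T v‖)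
    (hup : ∀ v ∈ Vᗮ, ‖T v‖ ≤ M * ‖v‖) (hMm : M ≤ c * m) {w : F}
    (hw : ‖V.starProjection (T w)‖ < γ * ‖T w - V.starProjection (T w)‖) :
    ‖V.starProjection w‖ < γ * c * ‖w - V.starProjection w‖ := by
  set u := V.starProjection w
  rw [V.starProjection_map_eq_map_starProjection hV hVperp, ← map_sub] at hw
  have hu' : ‖T (w - u)‖ ≤ M * ‖w - u‖ := hup _ (V.sub_starProjection_mem_orthogonal w)
  have hscaled : m * ‖u‖ < m * (γ * c * ‖w - u‖) :=
    calc m * ‖u‖ ≤ ‖T u‖ := hlow u (V.starProjection_apply_mem w)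
      _ < γ * ‖T (w - u)‖ := hw
      _ ≤ γ * (M * ‖w - u‖) := by gcongr
      _ ≤ γ * (c * m * ‖w - u‖) := by gcongr
      _ = m * (γ * c * ‖w - u‖) := by ring
  exact lt_of_mul_lt_mul_left hscaled hm.le

theorem mapsTo_iSup_iSup {E : ι → Submodule 𝕜 F} {T : 𝓕}
    (hT : ∀ i, MapsTo T (E i) (E i)) (p : ι → Prop) :
    MapsTo T (⨆ (i) (_ : p i), E i : Submodule 𝕜 F) (⨆ (i) (_ : p i), E i : Submodule 𝕜 F) := by
  have : (⨆ (i) (_ : p i), E i) ≤ comap (T : F →ₗ[𝕜] F) (⨆ (i) (_ : p i), E i) :=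
    iSup₂_le fun i hi v hv => show T v ∈ ⨆ (i) (_ : p i), E i from
      mem_iSup_of_mem i (mem_iSup_of_mem hi (hT i hv))
  exact fun v hv => this hv

theorem orthogonal_iSup_iSup_eq {E : ι → Submodule 𝕜 F}
    (hE : Pairwise fun i i' => E i ⟂ E i') (htop : ⨆ i, E i = ⊤) (p : ι → Prop) :
    (⨆ (i) (_ : p i), E i)ᗮ = ⨆ (i) (_ : ¬ p i), E i := by
  refine (eq_of_le_of_inf_le_of_sup_le (z := ⨆ (i) (_ : p i), E i) ?_ ?_ ?_).symm
  · refine isOrtho_iff_le.mp (isOrtho_iSup_left.mpr fun i => isOrtho_iSup_left.mpr fun hi =>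
      isOrtho_iSup_right.mpr fun i' => isOrtho_iSup_right.mpr fun hi' => hE ?_)
    rintro rfl
    exact hi hi'
  · rw [inf_comm, inf_orthogonal_eq_bot]
    exact bot_le
  · refine le_top.trans (htop.symm.trans_le (iSup_le fun i => ?_))
    by_cases hi : p i
    · exact le_sup_of_le_right (le_biSup _ hi)
    · exact le_sup_of_le_left (le_biSup _ hi)

theorem exists_norm_sq_eq_sum_of_mem_iSup {E : ι → Submodule 𝕜 F}
    (hE : Pairwise fun i i' => E i ⟂ E i') {T : 𝓕} (hT : ∀ i, MapsTo T (E i) (E i))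
    {p : ι → Prop} {v : F} (hv : v ∈ ⨆ (i) (_ : p i), E i) :
    ∃ (s : Finset (Subtype p)) (f : Subtype p → F), (∀ i : Subtype p, f i ∈ E i) ∧
      ‖v‖ ^ 2 = ∑ i ∈ s, ‖f i‖ ^ 2 ∧ ‖T v‖ ^ 2 = ∑ i ∈ s, ‖T (f i)‖ ^ 2 := by
  rw [iSup_subtype', mem_iSup_iff_exists_finsupp] at hv
  obtain ⟨f, hf, rfl⟩ := hv
  have hE' : OrthogonalFamily 𝕜 (fun i : Subtype p => E i) fun i => (E i).subtypeₗᵢ :=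
    orthogonalFamily_iff_pairwise.mpr fun i i' h => hE (Subtype.val_injective.ne h)
  refine ⟨f.support, f, hf, ?_, ?_⟩
  · exact hE'.norm_sum (fun i => ⟨f i, hf i⟩) f.support
  · rw [Finsupp.sum, map_sum]
    exact hE'.norm_sum (fun i => ⟨T (f i), hT i (hf i)⟩) f.support

theorem norm_map_le_of_mem_iSup {E : ι → Submodule 𝕜 F}
    (hE : Pairwise fun i i' => E i ⟂ E i') {T : 𝓕} (hT : ∀ i, MapsTo T (E i) (E i))
    {p : ι → Prop} {c : ℝ} (hc : 0 ≤ c) (hbound : ∀ i, p i → ∀ v ∈ E i, ‖T v‖ ≤ c * ‖v‖)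
    {v : F} (hv : v ∈ ⨆ (i) (_ : p i), E i) : ‖T v‖ ≤ c * ‖v‖ := by
  obtain ⟨s, f, hf, hv2, hTv2⟩ := exists_norm_sq_eq_sum_of_mem_iSup hE hT hv
  refine (pow_le_pow_iff_left₀ (norm_nonneg _) (by positivity) two_ne_zero).mp ?_
  rw [mul_pow, hv2, hTv2, Finset.mul_sum]
  gcongr with i
  rw [← mul_pow]
  gcongr
  exact hbound i i.2 _ (hf i)

theorem le_norm_map_of_mem_iSup {E : ι → Submodule 𝕜 F}
    (hE : Pairwise fun i i' => E i ⟂ E i') {T : 𝓕} (hT : ∀ i, MapsTo T (E i) (E i))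
    {p : ι → Prop} {c : ℝ} (hc : 0 ≤ c) (hbound : ∀ i, p i → ∀ v ∈ E i, c * ‖v‖ ≤ ‖T v‖)
    {v : F} (hv : v ∈ ⨆ (i) (_ : p i), E i) : c * ‖v‖ ≤ ‖T v‖ := by
  obtain ⟨s, f, hf, hv2, hTv2⟩ := exists_norm_sq_eq_sum_of_mem_iSup hE hT hv
  refine (pow_le_pow_iff_left₀ (by positivity) (norm_nonneg _) two_ne_zero).mp ?_
  rw [mul_pow, hv2, hTv2, Finset.mul_sum]
  gcongr with i
  rw [← mul_pow]
  gcongr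
  exact hbound i i.2 _ (hf i)

end Submodule

theorem dual_cone_contraction {d k : ℕ} (E : Fin k → Submodule ℝ (Euc d))
    (horth : ∀ i j : Fin k, i ≠ j → ∀ v ∈ E i, ∀ w ∈ E j, (inner ℝ v w : ℝ) = 0)
    (hspan : (⨆ i, E i) = ⊤)
    (lam : Fin k → ℝ) (hlam : StrictAnti lam) (κ δ : ℝ)
    (hκ : IsLeast {x : ℝ | ∃ i j : Fin k, (j : ℕ) = (i : ℕ) + 1 ∧ x = (lam i - lam j) / 2} κ)
    (hδ : 0 < δ) (hδκ : δ < κ / 2)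
    (A : Euc d ≃L[ℝ] Euc d)
    (hApres : ∀ i : Fin k, ⇑A '' (E i : Set (Euc d)) = (E i : Set (Euc d)))
    (hAnorm : ∀ i : Fin k, ∀ v ∈ E i, v ≠ 0 →
      Real.exp (lam i - δ / 4) * ‖v‖ < ‖A v‖ ∧ ‖A v‖ < Real.exp (lam i + δ / 4) * ‖v‖) :
    ∀ j : ℕ, 1 ≤ j → j ≤ k - 1 → ∀ γ : ℝ, 0 < γ →
      ⇑A.symm '' coneL E j γ ⊆ coneL E j (γ * Real.exp (-κ + δ / 4)) := by
  rintro j hj1 hjk γ hγ _ ⟨y, hy, rfl⟩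
  set a : Fin k := ⟨j - 1, by omega⟩
  set b : Fin k := ⟨j, by omega⟩
  have hE : Pairwise fun i i' => E i ⟂ E i' := fun i i' h =>
    isOrtho_iff_inner_eq.mpr (horth i i' h)
  have hAE : ∀ i, MapsTo A (E i) (E i) := fun i => mapsTo_iff_image_subset.mpr (hApres i).subset
  have hperp : (Vlow E j)ᗮ = ⨆ (i : Fin k) (_ : ¬ (i : ℕ) < j), E i :=
    orthogonal_iSup_iSup_eq hE hspan _
  have hlow : ∀ i : Fin k, (i : ℕ) < j → ∀ v ∈ E i, Real.exp (lam a - δ / 4) * ‖v‖ ≤ ‖A v‖ := by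
    intro i hi v hv
    rcases eq_or_ne v 0 with rfl | hv0
    · simp
    calc Real.exp (lam a - δ / 4) * ‖v‖ ≤ Real.exp (lam i - δ / 4) * ‖v‖ := by
          gcongr; exact hlam.antitone (show (i : ℕ) ≤ j - 1 by omega)
      _ ≤ ‖A v‖ := (hAnorm i v hv hv0).1.le
  have hup : ∀ i : Fin k, ¬ (i : ℕ) < j → ∀ v ∈ E i, ‖A v‖ ≤ Real.exp (lam b + δ / 4) * ‖v‖ := by
    intro i hi v hv
    rcases eq_or_ne v 0 with rfl | hv0
    · simp
    calc ‖A v‖ ≤ Real.exp (lam i + δ / 4) * ‖v‖ := (hAnorm i v hv hv0).2.le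
      _ ≤ Real.exp (lam b + δ / 4) * ‖v‖ := by
          gcongr; exact hlam.antitone (show j ≤ (i : ℕ) by omega)
  have hgap : κ ≤ (lam a - lam b) / 2 := hκ.2 ⟨a, b, show j = j - 1 + 1 by omega, rfl⟩
  refine (Vlow E j).norm_starProjection_lt_of_map (T := A) (mapsTo_iSup_iSup hAE _)
    (hperp ▸ mapsTo_iSup_iSup hAE _) (Real.exp_pos _) hγ.le
    (fun v hv => le_norm_map_of_mem_iSup hE hAE (Real.exp_pos _).le hlow hv)
    (fun v hv => norm_map_le_of_mem_iSup hE hAE (Real.exp_pos _).le hup (hperp ▸ hv)) ?_ ?_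
  · rw [← Real.exp_add]
    exact Real.exp_le_exp.mpr (by linarith)
  · rwa [A.apply_symm_apply]
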